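/- arXiv:1607.01843 — 3 statements merged into one kernel-verified Lean document; each statement's English description precedes it below -/
import Mathlib

section
/- If h is analytic on the unit disk with h(0)=1, Re h > 0, h(z)=1+∑ c_n z^n, and μ is any complex number, then |c_2 - μ c_1^2| ≤ 2·max{1, |2μ-1|}. -/
open Metric Complex Set Filter Topology ComplexConjugate

/-!
The Cayley transform `(h - 1) / (h + 1)` maps the disk into itself and fixes `0`, so by Schwarz's
lemma `h = (1 + z K) / (1 - z K)` with `‖K‖ ≤ 1`. Comparing Taylor coefficients gives
`c₁ = 2 K(0)` and `2 c₂ - c₁² = 4 K'(0)`, and the Schwarz–Pick bound `‖K'(0)‖ ≤ 1 - ‖K(0)‖²`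
becomes `‖2 c₂ - c₁²‖ ≤ 4 - ‖c₁‖²`. Finally `c₂ - μ c₁² = (2 c₂ - c₁²) / 2 - (2μ - 1) c₁² / 2`,
whose norm is at most `(4 - ‖c₁‖²) / 2 + ‖2μ - 1‖ ‖c₁‖² / 2`, a convex combination of `2` and
`2 ‖2μ - 1‖`.
-/

lemma HasDerivAt.sub_div_one_sub_conj_mul {f : ℂ → ℂ} {f' z : ℂ} (hf : HasDerivAt f f' z)
    (hz : 1 - conj (f z) * f z ≠ 0) :
    HasDerivAt (fun w ↦ (f w - f z) / (1 - conj (f z) * f w)) (f' / (1 - conj (f z) * f z)) z :=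
  ((hf.sub_const (f z)).fun_div ((hf.const_mul (conj (f z))).const_sub 1) hz).congr_deriv <| by
    rw [sub_self, zero_mul, sub_zero, sq, mul_div_mul_right _ _ hz]

namespace Complex

lemma normSq_one_sub_conj_mul_sub_normSq_sub (a w : ℂ) :
    normSq (1 - conj a * w) - normSq (w - a) = (1 - normSq a) * (1 - normSq w) := by
  simp only [normSq_apply, sub_re, sub_im, mul_re, mul_im, one_re, one_im, conj_re, conj_im]
  ring

lemma one_sub_conj_mul_ne_zero {a w : ℂ} (ha : ‖a‖ < 1) (hw : ‖w‖ ≤ 1) :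
    1 - conj a * w ≠ 0 := by
  refine sub_ne_zero.mpr fun h ↦ ?_
  have : ‖conj a * w‖ < 1 := by
    rw [norm_mul, RCLike.norm_conj]
    exact mul_lt_one_of_nonneg_of_lt_one_left (norm_nonneg a) ha hw
  rw [← h, norm_one] at this
  exact this.false

lemma norm_sub_div_one_sub_conj_mul_le_one {a w : ℂ} (ha : ‖a‖ < 1) (hw : ‖w‖ ≤ 1) :
    ‖(w - a) / (1 - conj a * w)‖ ≤ 1 := by
  rw [norm_div, div_le_one (norm_pos_iff.mpr (one_sub_conj_mul_ne_zero ha hw)),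
    ← sq_le_sq₀ (norm_nonneg _) (norm_nonneg _), Complex.sq_norm, Complex.sq_norm, ← sub_nonneg,
    normSq_one_sub_conj_mul_sub_normSq_sub, ← Complex.sq_norm, ← Complex.sq_norm]
  exact mul_nonneg (by nlinarith [norm_nonneg a]) (by nlinarith [norm_nonneg w])

theorem norm_deriv_le_one_sub_sq_of_mapsTo_ball {f : ℂ → ℂ}
    (hf : DifferentiableOn ℂ f (ball 0 1)) (hmaps : MapsTo f (ball 0 1) (closedBall 0 1)) :
    ‖deriv f 0‖ ≤ 1 - ‖f 0‖ ^ 2 := by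
  have h0 : (0 : ℂ) ∈ ball 0 1 := mem_ball_self one_pos
  have hf0 : ‖f 0‖ ≤ 1 := by simpa using hmaps h0
  rcases hf0.lt_or_eq with ha | ha
  · set a := f 0
    have hden : 1 - conj a * a ≠ 0 := one_sub_conj_mul_ne_zero ha ha.le
    set φ := fun w ↦ (f w - a) / (1 - conj a * f w)
    have hφ : DifferentiableOn ℂ φ (ball 0 1) := fun w hw ↦
      ((hf w hw).sub_const a).div ((differentiableWithinAt_const _).sub
        ((hf w hw).const_mul _)) (one_sub_conj_mul_ne_zero ha (by simpa using hmaps hw))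
    have hφmaps : MapsTo φ (ball 0 1) (closedBall (φ 0) 1) := fun w hw ↦ by
      simpa [φ, a] using norm_sub_div_one_sub_conj_mul_le_one ha (by simpa using hmaps hw)
    have hderiv : deriv φ 0 = deriv f 0 / (1 - conj a * a) :=
      ((hf.differentiableAt (ball_mem_nhds 0 one_pos)).hasDerivAt.sub_div_one_sub_conj_mul
        hden).deriv
    have hSchwarz : ‖deriv φ 0‖ ≤ 1 := norm_deriv_le_one_of_mapsTo_ball hφ hφmaps one_pos
    rwa [hderiv, norm_div, conj_mul', ← ofReal_pow, ← ofReal_one, ← ofReal_sub, norm_real,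
      Real.norm_of_nonneg (by nlinarith [norm_nonneg a]), div_le_one (by nlinarith [norm_nonneg a])]
      at hSchwarz
  · have hmax : IsMaxOn (norm ∘ f) (ball 0 1) 0 := fun w hw ↦ by
      simpa [ha] using hmaps hw
    have hconst : f =ᶠ[𝓝 0] fun _ ↦ f 0 :=
      eventually_of_mem (ball_mem_nhds 0 one_pos) (eqOn_of_isPreconnected_of_isMaxOn_norm
        (convex_ball 0 1).isPreconnected isOpen_ball hf h0 hmax)
    simp [hconst.deriv_eq, ha]

lemma norm_sub_one_lt_norm_add_one {w : ℂ} (hw : 0 < w.re) : ‖w - 1‖ < ‖w + 1‖ := by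
  rw [← sq_lt_sq₀ (norm_nonneg _) (norm_nonneg _), Complex.sq_norm, Complex.sq_norm]
  simp only [normSq_apply, sub_re, sub_im, add_re, add_im, one_re, one_im]
  nlinarith

theorem exists_eq_one_add_mul_of_re_pos {h : ℂ → ℂ} (hh : DifferentiableOn ℂ h (ball 0 1))
    (h0 : h 0 = 1) (hre : ∀ z ∈ ball (0 : ℂ) 1, 0 < (h z).re) :
    ∃ K : ℂ → ℂ, DifferentiableOn ℂ K (ball 0 1) ∧ MapsTo K (ball 0 1) (closedBall 0 1) ∧
      ∀ z ∈ ball (0 : ℂ) 1, h z = 1 + z * (K z * (h z + 1)) := by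
  have hne : ∀ z ∈ ball (0 : ℂ) 1, h z + 1 ≠ 0 := fun z hz ↦
    norm_pos_iff.mp ((norm_nonneg _).trans_lt (norm_sub_one_lt_norm_add_one (hre z hz)))
  set ω := fun z ↦ (h z - 1) / (h z + 1)
  have hω : DifferentiableOn ℂ ω (ball 0 1) :=
    (hh.sub_const 1).div (hh.add_const 1) hne
  have hω0 : ω 0 = 0 := by simp [ω, h0]
  have hωmaps : MapsTo ω (ball 0 1) (closedBall (ω 0) 1) := fun z hz ↦ by
    rw [hω0, mem_closedBall_zero_iff, norm_div]
    exact div_le_one_of_le₀ (norm_sub_one_lt_norm_add_one (hre z hz)).le (norm_nonneg _)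
  refine ⟨dslope ω 0, (differentiableOn_dslope (ball_mem_nhds 0 one_pos)).mpr hω,
    fun z hz ↦ by simpa using norm_dslope_le_div_of_mapsTo_ball hω hωmaps hz, fun z hz ↦ ?_⟩
  have hslope : z * dslope ω 0 z = ω z := by simpa [hω0] using sub_smul_dslope ω 0 z
  rw [← mul_assoc, hslope, div_mul_cancel₀ _ (hne z hz)]
  ring

end Complex

section TaylorCoefficients

variable {𝕜 : Type*} [NontriviallyNormedField 𝕜] {f P : 𝕜 → 𝕜} {a : 𝕜}

lemma iteratedDeriv_one_eq_of_eventuallyEq_add_mul (hP : DifferentiableAt 𝕜 P 0)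
    (hf : f =ᶠ[𝓝 0] fun z ↦ a + z * P z) : iteratedDeriv 1 f 0 = P 0 := by
  rw [(hf.iteratedDeriv 1).eq_of_nhds, iteratedDeriv_one]
  simpa using ((hasDerivAt_id 0).mul hP.hasDerivAt).const_add a |>.deriv

lemma iteratedDeriv_two_eq_of_eventuallyEq_add_mul [CompleteSpace 𝕜] (hP : AnalyticAt 𝕜 P 0)
    (hf : f =ᶠ[𝓝 0] fun z ↦ a + z * P z) : iteratedDeriv 2 f 0 = 2 * deriv P 0 := by
  have hderiv : deriv (fun z ↦ a + z * P z) =ᶠ[𝓝 0] fun z ↦ P z + z * deriv P z := by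
    filter_upwards [hP.eventually_analyticAt] with z hz
    simpa using ((hasDerivAt_id z).mul hz.differentiableAt.hasDerivAt).const_add a |>.deriv
  rw [(hf.iteratedDeriv 2).eq_of_nhds, iteratedDeriv_succ, iteratedDeriv_one, hderiv.deriv_eq]
  have := hP.differentiableAt.hasDerivAt.fun_add
    ((hasDerivAt_id' 0).fun_mul hP.deriv.differentiableAt.hasDerivAt)
  simpa [two_mul] using this.deriv

end TaylorCoefficients

lemma norm_sub_mul_sq_le_of_norm_two_mul_sub_sq_le {c₁ c₂ : ℂ} (μ : ℂ)
    (h : ‖2 * c₂ - c₁ ^ 2‖ ≤ 4 - ‖c₁‖ ^ 2) :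
    ‖c₂ - μ * c₁ ^ 2‖ ≤ 2 * max 1 ‖2 * μ - 1‖ := by
  set s := ‖2 * μ - 1‖
  have hsplit : c₂ - μ * c₁ ^ 2 = (2 * c₂ - c₁ ^ 2) / 2 - (2 * μ - 1) * c₁ ^ 2 / 2 := by ring
  calc ‖c₂ - μ * c₁ ^ 2‖ ≤ ‖2 * c₂ - c₁ ^ 2‖ / 2 + s * ‖c₁‖ ^ 2 / 2 := by
        rw [hsplit]
        refine (norm_sub_le _ _).trans_eq ?_
        rw [norm_div, norm_div, norm_mul, norm_pow, Complex.norm_two]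
    _ ≤ (4 - ‖c₁‖ ^ 2) / 2 * max 1 s + ‖c₁‖ ^ 2 / 2 * max 1 s := by
        have h4 : 0 ≤ 4 - ‖c₁‖ ^ 2 := (norm_nonneg _).trans h
        gcongr ?_ + ?_
        · nlinarith [le_max_left 1 s]
        · nlinarith [le_max_right 1 s, sq_nonneg ‖c₁‖]
    _ = 2 * max 1 s := by ring

theorem ma_minda_ineq
    (h : ℂ → ℂ) (c : ℕ → ℂ) (μ : ℂ)
    (hh : AnalyticOn ℂ h (ball 0 1))
    (h0 : h 0 = 1)
    (hre : ∀ z ∈ ball (0:ℂ) 1, 0 < (h z).re)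
    (hc : ∀ n, c n = iteratedDeriv n h 0 / (n.factorial : ℂ)) :
    ‖c 2 - μ * c 1 ^ 2‖ ≤ 2 * max 1 ‖2 * μ - 1‖ := by
  have hball : ball (0 : ℂ) 1 ∈ 𝓝 0 := ball_mem_nhds 0 one_pos
  obtain ⟨K, hK, hKmaps, hrep⟩ := exists_eq_one_add_mul_of_re_pos hh.differentiableOn h0 hre
  have hKa : AnalyticAt ℂ K 0 := hK.analyticAt hball
  have hha : AnalyticAt ℂ h 0 := AnalyticOn.analyticAt hball hh
  have hP : AnalyticAt ℂ (fun z ↦ K z * (h z + 1)) 0 := hKa.mul (hha.add analyticAt_const)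
  have hev : h =ᶠ[𝓝 0] fun z ↦ 1 + z * (K z * (h z + 1)) := eventually_of_mem hball hrep
  have hc1 : c 1 = 2 * K 0 := by
    rw [hc, iteratedDeriv_one_eq_of_eventuallyEq_add_mul hP.differentiableAt hev, h0]
    norm_num [mul_comm]
  have hP' : deriv (fun z ↦ K z * (h z + 1)) 0 = 2 * deriv K 0 + K 0 * c 1 := by
    rw [(hKa.differentiableAt.hasDerivAt.fun_mul
      (hha.differentiableAt.hasDerivAt.add_const 1)).deriv, hc 1, iteratedDeriv_one, h0,
      Nat.factorial_one, Nat.cast_one, div_one]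
    ring
  have hc2 : 2 * c 2 - c 1 ^ 2 = 4 * deriv K 0 := by
    rw [hc 2, iteratedDeriv_two_eq_of_eventuallyEq_add_mul hP hev, hP', hc1,
      Nat.factorial_two, Nat.cast_ofNat]
    ring
  refine norm_sub_mul_sq_le_of_norm_two_mul_sub_sq_le μ ?_
  have hSP := norm_deriv_le_one_sub_sq_of_mapsTo_ball hK hKmaps
  rw [hc2, hc1, norm_mul, norm_mul, Complex.norm_two, show ‖(4 : ℂ)‖ = 4 by norm_num]
  linear_combination 4 * hSP
end

section
/- Let f be analytic on the unit disk with f(0)=0, f'(0)=1, satisfying Re[(1-z)f'(z)] > 0 for all |z|<1, and let γ_1 be the first logarithmic coefficient, defined by γ_1 = a_2/2 where a_2 is the second Taylor coefficient of f. Then |γ_1| ≤ 3/4, and this bound is sharp. -/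
/-!
Put `p z = (1 - z) f'(z)`, so `p 0 = 1` and `Re p > 0` on the disc. The Cayley transform
`(p - 1) / (p + 1)` is then a self-map of the disc vanishing at `0`, and the Schwarz lemma gives
`|p'(0)| ≤ 2`. As `p'(0) = f''(0) - 1`, this yields `|f''(0)| ≤ 3`, i.e. `|γ₁| = |f''(0)| / 4 ≤ 3/4`.
Equality forces `p z = (1 + z) / (1 - z)`, i.e. `f z = 2z / (1 - z) + log (1 - z)`.
-/

open Metric Complex Set

lemma Complex.norm_sub_one_lt_norm_add_one_s7 {w : ℂ} (hw : 0 < w.re) : ‖w - 1‖ < ‖w + 1‖ := by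
  refine lt_of_pow_lt_pow_left₀ 2 (norm_nonneg _) ?_
  rw [← normSq_eq_norm_sq, ← normSq_eq_norm_sq]
  simp only [normSq_apply, sub_re, sub_im, add_re, add_im, one_re, one_im]
  nlinarith

lemma Complex.norm_deriv_le_two_div_of_re_pos {p : ℂ → ℂ} {c : ℂ} {R : ℝ}
    (hp : DifferentiableOn ℂ p (ball c R)) (hR : 0 < R) (hc : p c = 1)
    (hre : ∀ z ∈ ball c R, 0 < (p z).re) :
    ‖deriv p c‖ ≤ 2 / R := by
  have hne : ∀ z ∈ ball c R, p z + 1 ≠ 0 := fun z hz h => by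
    simpa [h] using (norm_nonneg _).trans_lt (norm_sub_one_lt_norm_add_one_s7 (hre z hz))
  set w : ℂ → ℂ := fun z => (p z - 1) / (p z + 1)
  have hw : DifferentiableOn ℂ w (ball c R) :=
    (hp.sub_const 1).div (hp.add_const 1) hne
  have hmaps : MapsTo w (ball c R) (closedBall (w c) 1) := fun z hz => by
    have hlt := norm_sub_one_lt_norm_add_one_s7 (hre z hz)
    rw [mem_closedBall, dist_eq_norm]
    simpa [w, hc, norm_div, div_le_one ((norm_nonneg _).trans_lt hlt)] using hlt.le
  have hwc : HasDerivAt w (deriv p c / 2) c := by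
    have hpc := (hp.differentiableAt (isOpen_ball.mem_nhds (mem_ball_self hR))).hasDerivAt
    refine ((hpc.sub_const 1).fun_div (hpc.add_const 1) (by norm_num [hc])).congr_deriv ?_
    rw [hc]; ring
  have hschwarz := norm_deriv_le_div_of_mapsTo_ball hw hmaps hR
  rw [hwc.deriv, norm_div, RCLike.norm_ofNat] at hschwarz
  calc ‖deriv p c‖ = 2 * (‖deriv p c‖ / 2) := by ring
    _ ≤ 2 * (1 / R) := by gcongr
    _ = 2 / R := by ring

lemma HasDerivAt.one_sub_mul {𝕜 : Type*} [NontriviallyNormedField 𝕜] {g : 𝕜 → 𝕜} {g' z : 𝕜}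
    (hg : HasDerivAt g g' z) : HasDerivAt (fun w => (1 - w) * g w) ((1 - z) * g' - g z) z := by
  refine (((hasDerivAt_id z).const_sub 1).fun_mul hg).congr_deriv ?_
  simp only [id]; ring

lemma norm_iteratedDeriv_two_le_three {f : ℂ → ℂ} (hf : AnalyticOn ℂ f (ball 0 1))
    (hf' : deriv f 0 = 1) (hre : ∀ z ∈ ball (0:ℂ) 1, 0 < ((1 - z) * deriv f z).re) :
    ‖iteratedDeriv 2 f 0‖ ≤ 3 := by
  have hdf : AnalyticOnNhd ℂ (deriv f) (ball 0 1) :=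
    (isOpen_ball.analyticOn_iff_analyticOnNhd.1 hf).deriv
  have hp : DifferentiableOn ℂ (fun z => (1 - z) * deriv f z) (ball 0 1) := fun z hz =>
    ((hdf z hz).differentiableAt.hasDerivAt.one_sub_mul).differentiableAt.differentiableWithinAt
  have hp' : HasDerivAt (fun z => (1 - z) * deriv f z) (iteratedDeriv 2 f 0 - 1) 0 := by
    simpa [iteratedDeriv_succ, hf'] using
      (hdf 0 (mem_ball_self one_pos)).differentiableAt.hasDerivAt.one_sub_mul
  have hcar := norm_deriv_le_two_div_of_re_pos hp one_pos (by simp [hf']) hre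
  rw [hp'.deriv, div_one] at hcar
  calc ‖iteratedDeriv 2 f 0‖ = ‖(iteratedDeriv 2 f 0 - 1) + 1‖ := by rw [sub_add_cancel]
    _ ≤ ‖iteratedDeriv 2 f 0 - 1‖ + ‖(1 : ℂ)‖ := norm_add_le _ _
    _ ≤ 3 := by rw [norm_one]; linarith

lemma Complex.re_one_add_div_one_sub_pos {z : ℂ} (hz : ‖z‖ < 1) : 0 < ((1 + z) / (1 - z)).re := by
  have hne : 1 - z ≠ 0 := fun h => by simp [sub_eq_zero.1 h |>.symm] at hz
  have hsq : normSq z < 1 := by rw [normSq_eq_norm_sq]; nlinarith [norm_nonneg z]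
  rw [div_re, ← add_div]
  refine div_pos ?_ (normSq_pos.2 hne)
  simp only [normSq_apply, add_re, add_im, sub_re, sub_im, one_re, one_im] at hsq ⊢
  nlinarith

lemma Complex.one_sub_mem_slitPlane {z : ℂ} (hz : z ∈ ball (0:ℂ) 1) : 1 - z ∈ slitPlane := by
  rw [mem_ball_zero_iff] at hz
  refine mem_slitPlane_iff.2 (Or.inl ?_)
  simp only [sub_re, one_re]
  linarith [re_le_norm z]

noncomputable def F1Extremal (z : ℂ) : ℂ := 2 * z / (1 - z) + log (1 - z)

lemma hasDerivAt_F1Extremal {z : ℂ} (hz : z ∈ ball (0:ℂ) 1) :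
    HasDerivAt F1Extremal ((1 + z) / (1 - z) ^ 2) z := by
  have hsl := one_sub_mem_slitPlane hz
  have hne := slitPlane_ne_zero hsl
  have hlin : HasDerivAt (fun w : ℂ => 1 - w) (-1) z := by
    simpa using (hasDerivAt_id z).const_sub 1
  refine ((((hasDerivAt_id z).const_mul 2).fun_div hlin hne).fun_add
    (hlin.clog hsl)).congr_deriv ?_
  field_simp
  simp only [id]
  ring

lemma analyticOn_F1Extremal : AnalyticOn ℂ F1Extremal (ball 0 1) :=
  (DifferentiableOn.analyticOnNhd (fun _ hz => (hasDerivAt_F1Extremal hz).differentiableAt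
    |>.differentiableWithinAt) isOpen_ball).analyticOn

lemma deriv_F1Extremal_zero : deriv F1Extremal 0 = 1 := by
  simp [(hasDerivAt_F1Extremal (mem_ball_self one_pos)).deriv]

lemma re_one_sub_mul_deriv_F1Extremal_pos {z : ℂ} (hz : z ∈ ball (0:ℂ) 1) :
    0 < ((1 - z) * deriv F1Extremal z).re := by
  have hne := slitPlane_ne_zero (one_sub_mem_slitPlane hz)
  have hp : (1 - z) * ((1 + z) / (1 - z) ^ 2) = (1 + z) / (1 - z) := by field_simp
  rw [(hasDerivAt_F1Extremal hz).deriv, hp]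
  exact re_one_add_div_one_sub_pos (mem_ball_zero_iff.1 hz)

lemma iteratedDeriv_two_F1Extremal_zero : iteratedDeriv 2 F1Extremal 0 = 3 := by
  have hderiv : deriv F1Extremal =ᶠ[nhds 0] fun z => (1 + z) / (1 - z) ^ 2 :=
    Filter.eventually_of_mem (isOpen_ball.mem_nhds (mem_ball_self one_pos))
      fun _ hz => (hasDerivAt_F1Extremal hz).deriv
  have hnum : HasDerivAt (fun z : ℂ => 1 + z) 1 0 := by
    simpa using (hasDerivAt_id (0:ℂ)).const_add 1
  have hden : HasDerivAt (fun z : ℂ => (1 - z) ^ 2) (2 * (1 - 0) ^ 1 * (-1)) 0 := by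
    simpa using ((hasDerivAt_id (0:ℂ)).const_sub 1).fun_pow 2
  rw [iteratedDeriv_succ, iteratedDeriv_one, hderiv.deriv_eq,
    (hnum.fun_div hden (by norm_num)).deriv]
  norm_num

theorem F1_gamma1 :
    (∀ f : ℂ → ℂ, AnalyticOn ℂ f (ball 0 1) → f 0 = 0 → deriv f 0 = 1 →
      (∀ z ∈ ball (0:ℂ) 1, 0 < ((1 - z) * deriv f z).re) →
      ‖(iteratedDeriv 2 f 0 / 2) / 2‖ ≤ 3/4) ∧
    ∃ f : ℂ → ℂ, AnalyticOn ℂ f (ball 0 1) ∧ f 0 = 0 ∧ deriv f 0 = 1 ∧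
      (∀ z ∈ ball (0:ℂ) 1, 0 < ((1 - z) * deriv f z).re) ∧
      ‖(iteratedDeriv 2 f 0 / 2) / 2‖ = 3/4 := by
  have hgamma (f : ℂ → ℂ) : ‖(iteratedDeriv 2 f 0 / 2) / 2‖ = ‖iteratedDeriv 2 f 0‖ / 4 := by
    rw [div_div, norm_div]; norm_num
  refine ⟨fun f hf _ hf' hre => ?_, F1Extremal, analyticOn_F1Extremal, by simp [F1Extremal],
    deriv_F1Extremal_zero, fun _ hz => re_one_sub_mul_deriv_F1Extremal_pos hz, ?_⟩
  · rw [hgamma]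
    linarith [norm_iteratedDeriv_two_le_three hf hf' hre]
  · rw [hgamma, iteratedDeriv_two_F1Extremal_zero]
    norm_num
end

section
/- If f is starlike (f analytic and univalent on the unit disk, f(0)=0, f'(0)=1, Re(z f'(z)/f(z)) > 0 on the disk), then its logarithmic coefficients satisfy |γ_n| ≤ 1/n for all n ≥ 1. -/
/-!
Put `q z = 1 + z φ'(z)`. Differentiating `f z = z e^{φ z}` shows `q = z f'/f` off the origin, so
`Re q ≥ 0` on the disk and `q 0 = 1`, and the `n`-th Taylor coefficient of `q` is `n` times that of
`φ`, i.e. `2 n γ_n`. Carathéodory's lemma bounds it by `2`.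

Carathéodory's lemma is proved on circles `|z| = r < 1`, where `z⁻¹ = z̄ / r²`: by Cauchy's formula
the `n`-th coefficient is the circle average of `z⁻ⁿ q`, while the average of `z⁻ⁿ q̄` is conjugate
to a multiple of the average of `zⁿ q`, which vanishes for `n ≥ 1`. Adding the two replaces `q` by
`2 Re q ≥ 0`, so the coefficient is at most `r⁻ⁿ` times the average of `2 Re q`, that is `2 Re q(0)`.
-/

open Metric Complex Real ComplexConjugate Topology

section Caratheodory

variable {f : ℂ → ℂ} {r : ℝ}

theorem norm_circleAverage_le {E : Type*} [NormedAddCommGroup E] [NormedSpace ℝ E]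
    (g : ℂ → E) (c : ℂ) (R : ℝ) :
    ‖circleAverage g c R‖ ≤ circleAverage (fun z ↦ ‖g z‖) c R := by
  rw [circleAverage_def, circleAverage_def, norm_smul, smul_eq_mul, Real.norm_eq_abs,
    abs_of_pos (by positivity)]
  gcongr
  exact intervalIntegral.norm_integral_le_integral_norm two_pi_pos.le

theorem circleAverage_inv_pow_mul_eq_iteratedDeriv (hr : 0 < r)
    (hf : DifferentiableOn ℂ f (closedBall 0 r)) (n : ℕ) :
    circleAverage (fun z ↦ (z ^ n)⁻¹ * f z) 0 r = iteratedDeriv n f 0 / n.factorial := by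
  rw [circleAverage_eq_circleIntegral hr.ne']
  have cauchy := hf.circleIntegral_one_div_sub_center_pow_smul hr n
  simp only [sub_zero, smul_eq_mul] at cauchy ⊢
  rw [show (fun z : ℂ ↦ z⁻¹ * ((z ^ n)⁻¹ * f z)) = fun z ↦ 1 / z ^ (n + 1) * f z by
    ext z; rw [pow_succ, one_div, mul_inv]; ring, cauchy]
  field_simp

theorem circleAverage_pow_mul_eq_zero (hr : 0 < r)
    (hf : DifferentiableOn ℂ f (closedBall 0 r)) {n : ℕ} (hn : n ≠ 0) :
    circleAverage (fun z ↦ z ^ n * f z) 0 r = 0 := by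
  have hd : DifferentiableOn ℂ (fun z ↦ z ^ n * f z) (closedBall 0 r) :=
    (differentiableOn_pow n).mul hf
  rw [(hd.diffContOnCl_ball (by rw [abs_of_pos hr])).circleAverage]
  simp [hn]

theorem inv_pow_mul_conj_eq_of_mem_sphere {z : ℂ} (hz : z ∈ sphere (0 : ℂ) r) (n : ℕ) (w : ℂ) :
    (z ^ n)⁻¹ * conj w = ((r ^ (2 * n) : ℝ) : ℂ)⁻¹ * conj (z ^ n * w) := by
  have hr : ((r ^ 2 : ℝ) : ℂ) = z * conj z := by
    rw [mul_conj, normSq_eq_norm_sq, mem_sphere_zero_iff_norm.mp hz]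
  rcases eq_or_ne z 0 with rfl | hz0
  · rcases n with _ | n <;> simp
  rw [pow_mul, ofReal_pow, hr, map_mul, map_pow, mul_pow, mul_inv, mul_assoc,
    inv_mul_cancel_left₀ (pow_ne_zero _ ((map_ne_zero _).mpr hz0))]

theorem norm_iteratedDeriv_div_factorial_mul_pow_le (hr : 0 < r)
    (hf : DifferentiableOn ℂ f (closedBall 0 r)) (hre : ∀ z ∈ sphere (0 : ℂ) r, 0 ≤ (f z).re)
    {n : ℕ} (hn : n ≠ 0) :
    ‖iteratedDeriv n f 0 / n.factorial‖ * r ^ n ≤ 2 * (f 0).re := by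
  have hsphere : sphere (0 : ℂ) |r| = sphere 0 r := by rw [abs_of_pos hr]
  have hfc : ContinuousOn f (sphere 0 r) := hf.continuousOn.mono sphere_subset_closedBall
  have hinv : ContinuousOn (fun z : ℂ ↦ (z ^ n)⁻¹) (sphere 0 r) :=
    (continuous_pow n).continuousOn.inv₀ fun z hz ↦ pow_ne_zero _ (ne_of_mem_sphere hz hr.ne')
  have hconj : circleAverage (fun z ↦ (z ^ n)⁻¹ * conj (f z)) 0 r = 0 := by
    have hcomm := (conjCLE.toContinuousLinearMap).circleAverage_comp_comm
      (f := fun z ↦ z ^ n * f z) (((continuous_pow n).continuousOn.mul hfc).circleIntegrable hr.le)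
    simp only [Function.comp_def, ContinuousLinearEquiv.coe_coe, conjCLE_apply] at hcomm
    calc circleAverage (fun z ↦ (z ^ n)⁻¹ * conj (f z)) 0 r
        = circleAverage (fun z ↦ ((r ^ (2 * n) : ℝ) : ℂ)⁻¹ * conj (z ^ n * f z)) 0 r :=
          circleAverage_congr_sphere fun z hz ↦
            inv_pow_mul_conj_eq_of_mem_sphere (hsphere ▸ hz) n _
      _ = ((r ^ (2 * n) : ℝ) : ℂ)⁻¹ * conj (circleAverage (fun z ↦ z ^ n * f z) 0 r) := by
          rw [← hcomm]
          exact circleAverage_fun_smul (a := ((r ^ (2 * n) : ℝ) : ℂ)⁻¹)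
      _ = 0 := by rw [circleAverage_pow_mul_eq_zero hr hf hn, map_zero, mul_zero]
  have hcoeff : iteratedDeriv n f 0 / n.factorial
      = circleAverage (fun z ↦ (z ^ n)⁻¹ * ((2 * (f z).re : ℝ) : ℂ)) 0 r := by
    calc iteratedDeriv n f 0 / n.factorial
        = circleAverage (fun z ↦ (z ^ n)⁻¹ * f z) 0 r
          + circleAverage (fun z ↦ (z ^ n)⁻¹ * conj (f z)) 0 r := by
          rw [hconj, add_zero, circleAverage_inv_pow_mul_eq_iteratedDeriv hr hf]
      _ = circleAverage (fun z ↦ (z ^ n)⁻¹ * f z + (z ^ n)⁻¹ * conj (f z)) 0 r :=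
          (circleAverage_fun_add ((hinv.mul hfc).circleIntegrable hr.le)
            ((hinv.mul (continuous_conj.comp_continuousOn hfc)).circleIntegrable hr.le)).symm
      _ = _ := by
          congr 1 with z
          rw [← mul_add, add_conj, ofReal_mul, ofReal_ofNat]
  have hre_avg : circleAverage (fun z ↦ (f z).re) 0 r = (f 0).re := by
    rw [← (hf.diffContOnCl_ball (by rw [abs_of_pos hr])).circleAverage]
    exact reCLM.circleAverage_comp_comm (hfc.circleIntegrable hr.le)
  have hsmul (a : ℝ) (g : ℂ → ℝ) :
      circleAverage (fun z ↦ a * g z) 0 r = a * circleAverage g 0 r :=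
    circleAverage_fun_smul (a := a) (f := g)
  calc ‖iteratedDeriv n f 0 / n.factorial‖ * r ^ n
      ≤ circleAverage (fun z ↦ ‖(z ^ n)⁻¹ * ((2 * (f z).re : ℝ) : ℂ)‖) 0 r * r ^ n := by
        rw [hcoeff]; gcongr; exact norm_circleAverage_le _ _ _
    _ = circleAverage (fun z ↦ (r ^ n)⁻¹ * (2 * (f z).re)) 0 r * r ^ n := by
        congr 1
        refine circleAverage_congr_sphere fun z hz ↦ ?_
        rw [hsphere] at hz
        rw [norm_mul, norm_inv, norm_pow, norm_real, Real.norm_of_nonneg (by linarith [hre z hz]),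
          mem_sphere_zero_iff_norm.mp hz]
    _ = 2 * (f 0).re := by
        rw [hsmul, hsmul, hre_avg]
        field_simp

theorem norm_iteratedDeriv_div_factorial_le (hf : DifferentiableOn ℂ f (ball 0 1))
    (hre : ∀ z ∈ ball (0 : ℂ) 1, 0 ≤ (f z).re) {n : ℕ} (hn : n ≠ 0) :
    ‖iteratedDeriv n f 0 / n.factorial‖ ≤ 2 * (f 0).re := by
  set c := ‖iteratedDeriv n f 0 / n.factorial‖
  have hlim : Filter.Tendsto (fun r : ℝ ↦ c * r ^ n) (𝓝[<] 1) (𝓝 c) := by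
    have h := ((continuous_pow n).tendsto (1 : ℝ)).const_mul c
    rw [one_pow, mul_one] at h
    exact h.mono_left nhdsWithin_le_nhds
  refine le_of_tendsto hlim ?_
  filter_upwards [Ioo_mem_nhdsLT zero_lt_one] with r hr
  exact norm_iteratedDeriv_div_factorial_mul_pow_le hr.1 (hf.mono (closedBall_subset_ball hr.2))
    (fun z hz ↦ hre z (sphere_subset_ball hr.2 hz)) hn

end Caratheodory

theorem iteratedDeriv_id_mul_deriv_zero {𝕜 : Type*} [NontriviallyNormedField 𝕜]
    [CompleteSpace 𝕜] {φ : 𝕜 → 𝕜} (hφ : AnalyticAt 𝕜 φ 0) (n : ℕ) :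
    iteratedDeriv n (fun z ↦ z * deriv φ z) 0 = n * iteratedDeriv n φ 0 := by
  rcases n with _ | n
  · simp
  rw [iteratedDeriv_fun_mul (by fun_prop) hφ.deriv.contDiffAt, Finset.sum_eq_single 1]
  · simp [iteratedDeriv_succ']
  · intro i _ hi
    simp [iteratedDeriv_fun_id_zero, hi]
  · simp

theorem mul_deriv_div_eq_one_add_mul_deriv {f φ : ℂ → ℂ} {z : ℂ} (hφ : DifferentiableAt ℂ φ z)
    (hz : z ≠ 0) (hf : f =ᶠ[𝓝 z] fun w ↦ w * exp (φ w)) :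
    z * deriv f z / f z = 1 + z * deriv φ z := by
  have hd : HasDerivAt (fun w ↦ w * exp (φ w))
      (1 * exp (φ z) + z * (exp (φ z) * deriv φ z)) z :=
    (hasDerivAt_id' z).mul hφ.hasDerivAt.cexp
  rw [hf.deriv_eq, hf.eq_of_nhds, hd.deriv]
  field_simp

theorem starlike_log_coeff_bound_general
    (f φ : ℂ → ℂ) (γ : ℕ → ℂ)
    (hst : ∀ z ∈ ball (0:ℂ) 1, z ≠ 0 → 0 < (z * deriv f z / f z).re)
    (hφ : AnalyticOn ℂ φ (ball 0 1))
    (hlog : ∀ z ∈ ball (0:ℂ) 1, z ≠ 0 → Complex.exp (φ z) = f z / z)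
    (hγ : ∀ n, γ n = iteratedDeriv n φ 0 / (2 * (n.factorial : ℂ))) :
    ∀ n : ℕ, 1 ≤ n → ‖γ n‖ ≤ 1 / n := by
  intro n hn
  have hφ' : AnalyticOnNhd ℂ φ (ball 0 1) := isOpen_ball.analyticOn_iff_analyticOnNhd.mp hφ
  set q : ℂ → ℂ := fun z ↦ 1 + z * deriv φ z
  have hq : DifferentiableOn ℂ q (ball 0 1) :=
    (analyticOnNhd_const.add (analyticOnNhd_id.mul hφ'.deriv)).differentiableOn
  have hq_re : ∀ z ∈ ball (0 : ℂ) 1, 0 ≤ (q z).re := by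
    intro z hz
    rcases eq_or_ne z 0 with rfl | hz0
    · simp [q]
    have hf : f =ᶠ[𝓝 z] fun w ↦ w * exp (φ w) := by
      filter_upwards [isOpen_ball.mem_nhds hz, isOpen_ne.mem_nhds hz0] with w hw hw0
      rw [hlog w hw hw0, mul_div_cancel₀ _ hw0]
    change 0 ≤ (1 + z * deriv φ z).re
    rw [← mul_deriv_div_eq_one_add_mul_deriv (hφ' z hz).differentiableAt hz0 hf]
    exact (hst z hz hz0).le
  have hq_coeff : iteratedDeriv n q 0 = n * iteratedDeriv n φ 0 := by
    rw [iteratedDeriv_const_add hn,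
      iteratedDeriv_id_mul_deriv_zero (hφ' 0 (mem_ball_self one_pos))]
  have hbound := norm_iteratedDeriv_div_factorial_le hq hq_re (n := n) (by omega)
  rw [hq_coeff, show (q 0).re = 1 by simp [q], mul_one] at hbound
  have hn' : (n : ℂ) ≠ 0 := by norm_cast; omega
  rw [hγ, show iteratedDeriv n φ 0 / (2 * (n.factorial : ℂ))
      = n * iteratedDeriv n φ 0 / n.factorial / (2 * n) by field_simp,
    norm_div, norm_mul, Complex.norm_two, Complex.norm_natCast]
  calc _ ≤ (2 : ℝ) / (2 * n) := by gcongr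
    _ = 1 / n := by field_simp

theorem starlike_log_coeff_bound
    (f φ : ℂ → ℂ) (γ : ℕ → ℂ)
    (hf : AnalyticOn ℂ f (ball 0 1))
    (hinj : Set.InjOn f (ball 0 1))
    (hf0 : f 0 = 0) (hf1 : deriv f 0 = 1)
    (hst : ∀ z ∈ ball (0:ℂ) 1, z ≠ 0 → 0 < (z * deriv f z / f z).re)
    (hφ : AnalyticOn ℂ φ (ball 0 1))
    (hφ0 : φ 0 = 0)
    (hlog : ∀ z ∈ ball (0:ℂ) 1, z ≠ 0 → Complex.exp (φ z) = f z / z)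
    (hγ : ∀ n, γ n = iteratedDeriv n φ 0 / (2 * (n.factorial : ℂ))) :
    ∀ n : ℕ, 1 ≤ n → ‖γ n‖ ≤ 1 / n :=
  starlike_log_coeff_bound_general f φ γ hst hφ hlog hγ
end
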